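/- arXiv:1803.07884 — 2 statements merged into one kernel-verified Lean document; each statement's English description precedes it below -/
import Mathlib

section
/- Reductions act as projections: Let (A,T) be an abstract space with skeleton Γ, and let V ∈ C⁰(ℝ²;T*) satisfy form boundedness; since each Γ(x) is invertible by the triangular structure, Ṽ(x) := Γ^{−*}(x)V(x) ∈ T* satisfies V(x).v = Ṽ(x).(Γ(x)v). Then for every η with β̲ < η ≤ β̄ the reduction is a restriction in terms of Ṽ: C_ηV(x).v = Σ_{β∈A, β<η} Ṽ_β(x).(Γ(x)v)_β for all x ∈ ℝ² and v ∈ T, where Ṽ_β denotes the component of Ṽ in T_β*. Consequently, for all β̲ < η ≤ η' ≤ β̄ one has C_η C_{η'} = C_{η'} C_η = C_η. -/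
open scoped BigOperators
open MeasureTheory

noncomputable section

/-- The parabolic metric `d(x,y) = |x₁−y₁| + √|x₂−y₂|` on `ℝ²`. -/
def pdist (x y : ℝ × ℝ) : ℝ := |x.1 - y.1| + Real.sqrt |x.2 - y.2|

/-- The kernel `ψ_T`, the inverse Fourier transform of `exp(−T(k₁⁴+k₂²))`. -/
def psiK (T : ℝ) (x : ℝ × ℝ) : ℝ :=
  ∫ k : ℝ × ℝ, Real.exp (-(T * (k.1 ^ 4 + k.2 ^ 2))) *
    Real.cos (2 * Real.pi * (k.1 * x.1 + k.2 * x.2))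

/-- Mollification at scale `t` by convolution with `ψ_t`. -/
def mollify {E : Type*} [NormedAddCommGroup E] [NormedSpace ℝ E]
    (t : ℝ) (g : ℝ × ℝ → E) (x : ℝ × ℝ) : E :=
  ∫ y : ℝ × ℝ, psiK t (x - y) • g y

/-- A (vector valued) tempered distribution represented through its semigroup
mollifications `g_T`, with the semigroup property `(g_T)_t = g_{T+t}`. -/
structure MollDistrib (E : Type*) [NormedAddCommGroup E] [NormedSpace ℝ E] where
  app : ℝ → ℝ × ℝ → E
  cont : ∀ T : ℝ, 0 < T → Continuous (app T)
  semigroup : ∀ T : ℝ, 0 < T → ∀ t : ℝ, 0 < t → app (T + t) = mollify t (app T)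

/-- The data of a skeleton on the abstract space `(A, T = ⊕_{β∈A} T_β)`:
a triangular, strongly continuous family of operators. -/
structure PreSkeleton (A : Finset ℝ) (Tb : A → Type*)
    [∀ β, NormedAddCommGroup (Tb β)] [∀ β, NormedSpace ℝ (Tb β)] where
  mat : ℝ × ℝ → ∀ β γ : A, Tb γ →L[ℝ] Tb β
  cont : ∀ (β γ : A) (v : Tb γ), Continuous fun x => mat x β γ v
  diag : ∀ (x : ℝ × ℝ) (β : A), mat x β β = ContinuousLinearMap.id ℝ (Tb β)
  upper : ∀ (x : ℝ × ℝ) (β γ : A), (β : ℝ) < (γ : ℝ) → mat x β γ = 0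

namespace PreSkeleton

variable {A : Finset ℝ} {Tb : A → Type*}
  [∀ β, NormedAddCommGroup (Tb β)] [∀ β, NormedSpace ℝ (Tb β)]

/-- `Γ_β(x)v = v_β + ∑_{γ<β} Γ_β^γ(x) v_γ`. -/
def apply (S : PreSkeleton A Tb) (x : ℝ × ℝ) (β : A) (v : ∀ γ : A, Tb γ) : Tb β :=
  ∑ γ : A, S.mat x β γ (v γ)

/-- The continuity property (ssss2) of a skeleton, with constant `C`. -/
def IsSkelBound (S : PreSkeleton A Tb) (C : ℝ) : Prop :=
  ∀ (β : A) (v : ∀ γ : A, Tb γ) (x y : ℝ × ℝ), pdist y x ≤ 1 →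
    ‖S.apply y β v - S.apply x β v‖ ≤
      C * ∑ γ : A, (if (γ : ℝ) < (β : ℝ)
        then pdist y x ^ ((β : ℝ) - (γ : ℝ)) * ‖S.apply x γ v‖ else 0)

/-- `Γ` is a skeleton: the continuity property holds for some `C ≥ 0`. -/
def IsSkeleton (S : PreSkeleton A Tb) : Prop := ∃ C, 0 ≤ C ∧ S.IsSkelBound C

/-- `‖Γ‖_sk`, the least admissible constant in the continuity property. -/
def skelNorm (S : PreSkeleton A Tb) : ℝ := sInf {C | 0 ≤ C ∧ S.IsSkelBound C}

/-- Form boundedness of `V : ℝ² → T*` with constants `(M_β^b)`. -/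
def FormBounded (S : PreSkeleton A Tb) (V : ℝ × ℝ → (∀ γ : A, Tb γ) → ℝ)
    (Mb : A → ℝ) : Prop :=
  ∀ x v, |V x v| ≤ ∑ β : A, Mb β * ‖S.apply x β v‖

/-- Form continuity of order `ord` with constant `Mc`. -/
def FormContinuous (S : PreSkeleton A Tb) (ord : ℝ)
    (V : ℝ × ℝ → (∀ γ : A, Tb γ) → ℝ) (Mc : ℝ) : Prop :=
  ∀ x y v, pdist y x ≤ 1 →
    |V y v - V x v| ≤
      Mc * ∑ β : A, pdist y x ^ max (ord - (β : ℝ)) 0 * ‖S.apply x β v‖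

/-- `V` is a modelled distribution of order `ord` relative to the skeleton `S`. -/
def IsModelled (S : PreSkeleton A Tb) (ord : ℝ)
    (V : ℝ × ℝ → (∀ γ : A, Tb γ) → ℝ) : Prop :=
  (∀ x, IsLinearMap ℝ (V x)) ∧ (∀ v, Continuous fun x => V x v) ∧
    (∃ Mb : A → ℝ, (∀ β, 0 ≤ Mb β) ∧ S.FormBounded V Mb) ∧
    (∃ Mc : ℝ, 0 ≤ Mc ∧ S.FormContinuous ord V Mc)

/-- The seminorm `[V]_{D^{ord}(T;Γ)}`: least form-continuity constant. -/
def ctyNorm (S : PreSkeleton A Tb) (ord : ℝ)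
    (V : ℝ × ℝ → (∀ γ : A, Tb γ) → ℝ) : ℝ :=
  sInf {Mc | 0 ≤ Mc ∧ S.FormContinuous ord V Mc}

/-- The norm `‖V‖_{T;Γ}`: least `M` such that the constants `M·N^{⟨β⟩}` are
admissible for form boundedness. -/
def bdNorm (S : PreSkeleton A Tb) (N : ℝ) (exps : A → ℝ)
    (V : ℝ × ℝ → (∀ γ : A, Tb γ) → ℝ) : ℝ :=
  sInf {M | 0 ≤ M ∧ S.FormBounded V fun β => M * N ^ exps β}

/-- One step `(id − Γ_b)` of the reduction procedure. -/
def cutStep (S : PreSkeleton A Tb) (x : ℝ × ℝ) (b : ℝ)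
    (v : ∀ γ : A, Tb γ) : ∀ γ : A, Tb γ :=
  fun γ => v γ - if (γ : ℝ) = b then S.apply x γ v else 0

/-- The reduction of a vector: all levels `≥ η` are cut, in increasing order. -/
def cutVec (S : PreSkeleton A Tb) (x : ℝ × ℝ) (η : ℝ)
    (v : ∀ γ : A, Tb γ) : ∀ γ : A, Tb γ :=
  ((A.filter fun b => η ≤ b).sort (· ≤ ·)).foldl (fun w b => S.cutStep x b w) v

/-- The reduction `C_η V` of a modelled distribution. -/
def cutForm (S : PreSkeleton A Tb) (η : ℝ)
    (V : ℝ × ℝ → (∀ γ : A, Tb γ) → ℝ) : ℝ × ℝ → (∀ γ : A, Tb γ) → ℝ :=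
  fun x v => V x (S.cutVec x η v)

end PreSkeleton

/-- `m(η) = min{⟨β⟩ : β ∈ A, β ≥ η}`. -/
def minExpFrom (A : Finset ℝ) (exps : A → ℝ) (η : ℝ) : ℝ :=
  sInf {r | ∃ β : A, η ≤ (β : ℝ) ∧ r = exps β}

/-!
`Γ(x) = 1 + N(x)` with `N(x)` strictly lower triangular, hence nilpotent, so `Γ(x)` is invertible
and every linear form on `T` can be written in the coordinates `Γ_β(x)v`. The step `id − Γ_b`
annihilates the coordinate `Γ_b(x)v` and leaves every `Γ_β(x)v` with `β < b` untouched, since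
`Γ_β` only sees levels `≤ β`. Cutting the levels `≥ η` in increasing order therefore acts in
`Γ`-coordinates as the projection onto the levels `< η`; such projections compose by taking the
smaller threshold, and the injectivity of `Γ(x)` transfers this back to vectors.
-/

theorem Module.End.isNilpotent_of_strictLowerTriangular {R ι : Type*} [Semiring R]
    [Fintype ι] [Preorder ι] [DecidableRel (α := ι) (· < ·)] {M : ι → Type*}
    [∀ i, AddCommMonoid (M i)] [∀ i, Module R (M i)] (N : Module.End R (∀ i, M i))
    (hN : ∀ v i, (∀ j < i, v j = 0) → N v i = 0) : IsNilpotent N := by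
  have hpow : ∀ k v i, (Finset.univ.filter (· < i)).card < k → (N ^ k) v i = 0 := by
    intro k
    induction k with
    | zero => exact fun _ _ hk => (Nat.not_lt_zero _ hk).elim
    | succ k ih =>
      intro v i hk
      rw [pow_succ', Module.End.mul_apply]
      refine hN _ i fun j hji => ih v j (lt_of_lt_of_le ?_ (Nat.lt_succ_iff.1 hk))
      refine Finset.card_lt_card <| (Finset.ssubset_iff_of_subset fun l => ?_).2 ⟨j, ?_, ?_⟩
      · simpa using (·.trans hji)
      · simpa using hji
      · simp
  exact ⟨Fintype.card ι, LinearMap.ext fun v => funext fun i =>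
    hpow _ v i (Finset.card_lt_univ_of_notMem (x := i) (by simp))⟩

namespace PreSkeleton

variable {A : Finset ℝ} {Tb : A → Type*}
  [∀ β, NormedAddCommGroup (Tb β)] [∀ β, NormedSpace ℝ (Tb β)]
  (S : PreSkeleton A Tb)

def toEnd (x : ℝ × ℝ) : Module.End ℝ (∀ γ : A, Tb γ) where
  toFun v β := S.apply x β v
  map_add' v w := funext fun β => by simp [apply, Finset.sum_add_distrib]
  map_smul' c v := funext fun β => by simp [apply, Finset.smul_sum]

@[simp]
theorem toEnd_apply (x : ℝ × ℝ) (v : ∀ γ : A, Tb γ) (β : A) :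
    S.toEnd x v β = S.apply x β v := rfl

theorem apply_congr_of_forall_le {x : ℝ × ℝ} {β : A} {v w : ∀ γ : A, Tb γ}
    (h : ∀ γ : A, (γ : ℝ) ≤ β → v γ = w γ) : S.apply x β v = S.apply x β w := by
  refine Finset.sum_congr rfl fun γ _ => ?_
  rcases le_or_gt (γ : ℝ) β with hγ | hγ
  · rw [h γ hγ]
  · simp [S.upper x β γ hγ]

theorem apply_single_self (x : ℝ × ℝ) (β : A) (u : Tb β) : S.apply x β (Pi.single β u) = u := by
  rw [apply, Finset.sum_eq_single β (fun γ _ hγ => by simp [hγ]) (by simp), Pi.single_eq_same,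
    S.diag, ContinuousLinearMap.id_apply]

theorem apply_eq_self_of_forall_lt {x : ℝ × ℝ} {β : A} {v : ∀ γ : A, Tb γ}
    (h : ∀ γ : A, (γ : ℝ) < β → v γ = 0) : S.apply x β v = v β := by
  rw [S.apply_congr_of_forall_le (w := Pi.single β (v β)) fun γ hγ => ?_]
  · exact S.apply_single_self x β (v β)
  · rcases hγ.lt_or_eq with hγ | hγ
    · simp [h γ hγ, ne_of_apply_ne Subtype.val hγ.ne]
    · obtain rfl := Subtype.coe_injective hγ
      simp

theorem toEnd_bijective (x : ℝ × ℝ) : Function.Bijective (S.toEnd x) := by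
  have hN : IsNilpotent (S.toEnd x - 1) :=
    Module.End.isNilpotent_of_strictLowerTriangular _ fun v β h => by
      simp [S.apply_eq_self_of_forall_lt h]
  simpa using (Module.End.isUnit_iff _).1 hN.isUnit_add_one

theorem exists_forall_eq_sum_apply (x : ℝ × ℝ) (f : (∀ γ : A, Tb γ) →ₗ[ℝ] ℝ) :
    ∃ w : ∀ β : A, Tb β →ₗ[ℝ] ℝ, ∀ v, f v = ∑ β : A, w β (S.apply x β v) := by
  let e := LinearEquiv.ofBijective (S.toEnd x) (S.toEnd_bijective x)
  refine ⟨fun β => f ∘ₗ e.symm.toLinearMap ∘ₗ LinearMap.single ℝ Tb β, fun v => ?_⟩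
  have hsum : ∑ β : A, Pi.single β (S.apply x β v) = e v := Finset.univ_sum_single _
  simp only [LinearMap.coe_comp, Function.comp_apply, LinearMap.coe_single, ← map_sum, hsum,
    LinearEquiv.coe_coe, LinearEquiv.symm_apply_apply]

theorem apply_cutStep_of_lt {x : ℝ × ℝ} {b : ℝ} {β : A} (hβ : (β : ℝ) < b)
    (v : ∀ γ : A, Tb γ) : S.apply x β (S.cutStep x b v) = S.apply x β v :=
  S.apply_congr_of_forall_le fun γ hγ => by simp [cutStep, (hγ.trans_lt hβ).ne]

theorem apply_cutStep_self (x : ℝ × ℝ) (β : A) (v : ∀ γ : A, Tb γ) :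
    S.apply x β (S.cutStep x β v) = 0 := by
  have hcut : S.cutStep x β v = v - Pi.single β (S.apply x β v) := by
    funext γ
    by_cases hγ : γ = β
    · subst hγ; simp [cutStep]
    · simp [cutStep, hγ, Subtype.coe_ne_coe.2 hγ]
  rw [hcut, ← toEnd_apply, map_sub, Pi.sub_apply, toEnd_apply, toEnd_apply, S.apply_single_self,
    sub_self]

theorem apply_foldl_cutStep_of_forall_lt {x : ℝ × ℝ} {β : A} {l : List ℝ}
    (hl : ∀ b ∈ l, (β : ℝ) < b) (v : ∀ γ : A, Tb γ) :
    S.apply x β (l.foldl (fun w b => S.cutStep x b w) v) = S.apply x β v := by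
  induction l generalizing v with
  | nil => rfl
  | cons b l ih =>
    rw [List.foldl_cons, ih (fun b' hb' => hl b' (List.mem_cons_of_mem _ hb')),
      S.apply_cutStep_of_lt (hl b List.mem_cons_self)]

theorem apply_foldl_cutStep_of_mem {x : ℝ × ℝ} {β : A} {l : List ℝ}
    (hl : l.Pairwise (· < ·)) (hβ : (β : ℝ) ∈ l) (v : ∀ γ : A, Tb γ) :
    S.apply x β (l.foldl (fun w b => S.cutStep x b w) v) = 0 := by
  induction l generalizing v with
  | nil => simp at hβ
  | cons b l ih =>
    rw [List.pairwise_cons] at hl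
    rw [List.foldl_cons]
    rcases List.mem_cons.1 hβ with rfl | hβ
    · rw [S.apply_foldl_cutStep_of_forall_lt hl.1, S.apply_cutStep_self]
    · exact ih hl.2 hβ _

theorem apply_cutVec (x : ℝ × ℝ) (η : ℝ) (v : ∀ γ : A, Tb γ) (β : A) :
    S.apply x β (S.cutVec x η v) = if (β : ℝ) < η then S.apply x β v else 0 := by
  split_ifs with hβ
  · refine S.apply_foldl_cutStep_of_forall_lt (fun b hb => ?_) v
    exact hβ.trans_le (Finset.mem_filter.1 ((Finset.mem_sort _).1 hb)).2
  · refine S.apply_foldl_cutStep_of_mem (Finset.sortedLT_sort _).pairwise ?_ v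
    exact (Finset.mem_sort _).2 (Finset.mem_filter.2 ⟨β.2, not_lt.1 hβ⟩)

theorem cutVec_cutVec (x : ℝ × ℝ) (η η' : ℝ) (v : ∀ γ : A, Tb γ) :
    S.cutVec x η (S.cutVec x η' v) = S.cutVec x (min η η') v := by
  refine (S.toEnd_bijective x).1 (funext fun β => ?_)
  simp only [toEnd_apply, apply_cutVec, lt_min_iff]
  split_ifs <;> simp_all

theorem cutForm_cutForm (η η' : ℝ) (V : ℝ × ℝ → (∀ γ : A, Tb γ) → ℝ) :
    S.cutForm η (S.cutForm η' V) = S.cutForm (min η' η) V :=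
  funext fun x => funext fun v => congrArg (V x) (S.cutVec_cutVec x η' η v)

theorem cutForm_eq_sum {V : ℝ × ℝ → (∀ γ : A, Tb γ) → ℝ} {W : ℝ × ℝ → ∀ β : A, Tb β → ℝ}
    (hW : ∀ x β, W x β 0 = 0) (hV : ∀ x v, V x v = ∑ β : A, W x β (S.apply x β v))
    (η : ℝ) (x : ℝ × ℝ) (v : ∀ γ : A, Tb γ) :
    S.cutForm η V x v = ∑ β : A, if (β : ℝ) < η then W x β (S.apply x β v) else 0 := by
  rw [cutForm, hV]
  refine Finset.sum_congr rfl fun β _ => ?_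
  rw [S.apply_cutVec]
  split_ifs <;> simp [hW]

end PreSkeleton

theorem reductions_act_as_projections_general
    {A : Finset ℝ} {Tb : A → Type*}
    [∀ β, NormedAddCommGroup (Tb β)] [∀ β, NormedSpace ℝ (Tb β)]
    (S : PreSkeleton A Tb) (hA : A.Nonempty)
    (V : ℝ × ℝ → (∀ γ : A, Tb γ) → ℝ)
    (hlin : ∀ x, IsLinearMap ℝ (V x)) :
    (∃ W : ℝ × ℝ → ∀ β : A, Tb β → ℝ,
      (∀ x β, IsLinearMap ℝ (W x β)) ∧
      ∀ (x : ℝ × ℝ) (v : ∀ γ : A, Tb γ),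
        V x v = ∑ β : A, W x β (S.apply x β v)) ∧
    (∀ W : ℝ × ℝ → ∀ β : A, Tb β → ℝ,
      (∀ x β, IsLinearMap ℝ (W x β)) →
      (∀ (x : ℝ × ℝ) (v : ∀ γ : A, Tb γ),
        V x v = ∑ β : A, W x β (S.apply x β v)) →
      ∀ η : ℝ, A.min' hA < η → η ≤ A.max' hA →
        ∀ (x : ℝ × ℝ) (v : ∀ γ : A, Tb γ),
          S.cutForm η V x v =
            ∑ β : A, (if (β : ℝ) < η then W x β (S.apply x β v) else 0)) ∧
    (∀ η η' : ℝ, A.min' hA < η → η ≤ η' → η' ≤ A.max' hA →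
      S.cutForm η (S.cutForm η' V) = S.cutForm η V ∧
      S.cutForm η' (S.cutForm η V) = S.cutForm η V) := by
  choose w hw using fun x => S.exists_forall_eq_sum_apply x (IsLinearMap.mk' (V x) (hlin x))
  refine ⟨⟨fun x β => w x β, fun x β => (w x β).isLinear, hw⟩,
    fun W hW hV η _ _ => S.cutForm_eq_sum (fun x β => (hW x β).map_zero) hV η,
    fun η η' _ hηη' _ => ?_⟩
  rw [S.cutForm_cutForm, S.cutForm_cutForm, min_eq_right hηη', min_eq_left hηη']
  exact ⟨rfl, rfl⟩

/-- **Reductions act as projections.** -/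
theorem reductions_act_as_projections
    {A : Finset ℝ} {Tb : A → Type*}
    [∀ β, NormedAddCommGroup (Tb β)] [∀ β, NormedSpace ℝ (Tb β)]
    (S : PreSkeleton A Tb) (hS : S.IsSkeleton) (hA : A.Nonempty)
    (V : ℝ × ℝ → (∀ γ : A, Tb γ) → ℝ)
    (hlin : ∀ x, IsLinearMap ℝ (V x)) (hcont : ∀ v, Continuous fun x => V x v)
    (hbd : ∃ Mb : A → ℝ, (∀ β, 0 ≤ Mb β) ∧ S.FormBounded V Mb) :
    (∃ W : ℝ × ℝ → ∀ β : A, Tb β → ℝ,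
      (∀ x β, IsLinearMap ℝ (W x β)) ∧
      ∀ (x : ℝ × ℝ) (v : ∀ γ : A, Tb γ),
        V x v = ∑ β : A, W x β (S.apply x β v)) ∧
    (∀ W : ℝ × ℝ → ∀ β : A, Tb β → ℝ,
      (∀ x β, IsLinearMap ℝ (W x β)) →
      (∀ (x : ℝ × ℝ) (v : ∀ γ : A, Tb γ),
        V x v = ∑ β : A, W x β (S.apply x β v)) →
      ∀ η : ℝ, A.min' hA < η → η ≤ A.max' hA →
        ∀ (x : ℝ × ℝ) (v : ∀ γ : A, Tb γ),
          S.cutForm η V x v =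
            ∑ β : A, (if (β : ℝ) < η then W x β (S.apply x β v) else 0)) ∧
    (∀ η η' : ℝ, A.min' hA < η → η ≤ η' → η' ≤ A.max' hA →
      S.cutForm η (S.cutForm η' V) = S.cutForm η V ∧
      S.cutForm η' (S.cutForm η V) = S.cutForm η V) :=
  reductions_act_as_projections_general S hA V hlin
end
end

section
/- Properties of the slope function ν in the integration result: Under the assumptions and with the notation of the integration proposition (κ ∈ (1,2), A ⊂ [0,κ) finite, U bounded and periodic and continuous in its second variable, local splitting constant M̄, three-point continuity constant M̄̄): (i) ν is uniquely determined by U: if ν and ν̃ both make sup_{x≠y} d^{−κ}(y,x)|U(x,y) − U(x,x) − ν(x)(y−x)₁| finite, then ν = ν̃; (ii) if U is in addition periodic in its first variable, then ν is periodic; (iii) if 0 ∉ A, then ν is Hölder continuous with exponent (κ−1) ∧ min A: |ν(y) − ν(x)| ≤ C(M̄ + M̄̄)(d^{κ−1}(y,x) + Σ_{β∈A} d^{β}(y,x)) for all x,y, with C depending only on λ, κ and A. -/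
/-!
Along the horizontal segment from `x` to `x + (t, 0)` two slope functions differ by at most
`O(t^κ)` in `t · (ν x - ν' x)`, and `κ > 1` forces `ν = ν'`; `x ↦ ν (x + k)` is again a slope
function when `U` is periodic in both variables, hence equals `ν`.

For the Hölder bound put `s = d(y, x)` and `z = y + (s, 0)`: the slope conditions at `(x, z)`,
`(x, y)`, `(y, z)` and the three-point condition at `(x, y, z)` give
`|ν x - ν y - γ(x, y)| s ≲ s^κ`, while the three-point condition at `(x, y, y + (1, 0))`, where
periodicity of `U` cancels everything but `γ`, gives `|γ(x, y)| ≤ M̄̄ ∑_β d^β(y, x)`.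
-/
open MeasureTheory

noncomputable section

/-- Partial derivative in the first (space-like) variable. -/
def pd1 (g : ℝ × ℝ → ℝ) (x : ℝ × ℝ) : ℝ := deriv (fun s => g (s, x.2)) x.1

/-- Partial derivative in the second (time-like) variable. -/
def pd2 (g : ℝ × ℝ → ℝ) (x : ℝ × ℝ) : ℝ := deriv (fun s => g (x.1, s)) x.2

/-- Mollification of a scalar function at scale `t`. -/
def mollS (t : ℝ) (g : ℝ × ℝ → ℝ) (x : ℝ × ℝ) : ℝ :=
  ∫ y : ℝ × ℝ, psiK t (x - y) * g y

/-- `[0,1)²`-periodicity. -/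
def PeriodicFn {E : Type*} (g : ℝ × ℝ → E) : Prop :=
  ∀ (x : ℝ × ℝ) (k : ℤ × ℤ), g (x.1 + k.1, x.2 + k.2) = g x

lemma pdist_nonneg (x y : ℝ × ℝ) : 0 ≤ pdist x y := by
  unfold pdist; positivity

lemma pdist_pos {x y : ℝ × ℝ} (h : x ≠ y) : 0 < pdist x y := by
  refine (pdist_nonneg x y).lt_of_ne' fun h0 => h ?_
  obtain ⟨h1, h2⟩ := (add_eq_zero_iff_of_nonneg (abs_nonneg _) (Real.sqrt_nonneg _)).mp h0
  rw [abs_eq_zero, sub_eq_zero] at h1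
  rw [Real.sqrt_eq_zero (abs_nonneg _), abs_eq_zero, sub_eq_zero] at h2
  exact Prod.ext h1 h2

lemma pdist_add_fst_self (y : ℝ × ℝ) (t : ℝ) : pdist (y.1 + t, y.2) y = |t| := by
  simp [pdist]

lemma pdist_add_int (x y : ℝ × ℝ) (k : ℤ × ℤ) :
    pdist (x.1 + k.1, x.2 + k.2) (y.1 + k.1, y.2 + k.2) = pdist x y := by
  simp [pdist]

open Topology in
lemma eq_of_abs_sub_mul_le_rpow {κ a b M : ℝ} (hκ : 1 < κ)
    (h : ∀ t : ℝ, 0 < t → |a - b| * t ≤ M * t ^ κ) : a = b := by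
  have hlim : Filter.Tendsto (fun t : ℝ => M * t ^ (κ - 1)) (𝓝[>] 0) (𝓝 0) := by
    have hc : ContinuousAt (fun t : ℝ => M * t ^ (κ - 1)) 0 :=
      continuousAt_const.mul (Real.continuousAt_rpow_const 0 _ (Or.inr (by linarith)))
    simpa [Real.zero_rpow (by linarith : κ - 1 ≠ 0)] using hc.tendsto.mono_left nhdsWithin_le_nhds
  have hle : |a - b| ≤ 0 := by
    refine ge_of_tendsto hlim (eventually_nhdsWithin_of_forall fun t (ht : 0 < t) => ?_)
    have hκt : t ^ κ = t ^ (κ - 1) * t := by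
      rw [← Real.rpow_add_one ht.ne', sub_add_cancel]
    have := h t ht
    rw [hκt, ← mul_assoc] at this
    exact le_of_mul_le_mul_right this ht
  exact sub_eq_zero.mp (abs_nonpos_iff.mp hle)

lemma pdist_add_fst_le (x y : ℝ × ℝ) (t : ℝ) : pdist (y.1 + t, y.2) x ≤ pdist y x + |t| := by
  have := abs_add_le (y.1 - x.1) t
  simp only [pdist, add_sub_right_comm y.1 t x.1]
  linarith

lemma slope_unique {κ : ℝ} (hκ : 1 < κ) {f : ℝ × ℝ → ℝ} {x : ℝ × ℝ} {a b M M' : ℝ}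
    (ha : ∀ y, |f y - f x - a * (y.1 - x.1)| ≤ M * pdist y x ^ κ)
    (hb : ∀ y, |f y - f x - b * (y.1 - x.1)| ≤ M' * pdist y x ^ κ) : a = b := by
  refine eq_of_abs_sub_mul_le_rpow (M := M + M') hκ fun t ht => ?_
  have ha' := ha (x.1 + t, x.2)
  have hb' := hb (x.1 + t, x.2)
  rw [pdist_add_fst_self, abs_of_pos ht, add_sub_cancel_left] at ha' hb'
  rw [← abs_of_pos ht, ← abs_mul, abs_of_pos ht]
  refine abs_le.mpr ⟨?_, ?_⟩ <;> linarith [abs_le.mp ha', abs_le.mp hb']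

section Slope

variable {U : ℝ × ℝ → ℝ × ℝ → ℝ} {ν : ℝ × ℝ → ℝ} {γ : ℝ × ℝ → ℝ × ℝ → ℝ}
  {κ M Mν Mbb : ℝ} {A : Finset ℝ}

lemma slope_add_int
    (hν : ∀ x y, |U x y - U x x - ν x * (y.1 - x.1)| ≤ M * pdist y x ^ κ)
    (hU : ∀ (x y : ℝ × ℝ) (k : ℤ × ℤ), U (x.1 + k.1, x.2 + k.2) (y.1 + k.1, y.2 + k.2) = U x y)
    (x : ℝ × ℝ) (k : ℤ × ℤ) (y : ℝ × ℝ) :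
    |U x y - U x x - ν (x.1 + k.1, x.2 + k.2) * (y.1 - x.1)| ≤ M * pdist y x ^ κ := by
  simpa only [hU, pdist_add_int, add_sub_add_right_eq_sub] using
    hν (x.1 + k.1, x.2 + k.2) (y.1 + k.1, y.2 + k.2)

lemma abs_le_of_periodic_of_three_point (hU : ∀ x, PeriodicFn (U x))
    (h3 : ∀ x y z : ℝ × ℝ, |U x z - U x y - U y z + U y y - γ x y * (z.1 - y.1)| ≤
      Mbb * ∑ β ∈ A, pdist y x ^ β * pdist z y ^ (κ - β))
    (x y : ℝ × ℝ) : |γ x y| ≤ Mbb * ∑ β ∈ A, pdist y x ^ β := by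
  have hshift : ∀ w, U w (y.1 + 1, y.2) = U w y := fun w => by
    simpa using hU w y (1, 0)
  simpa [hshift, pdist_add_fst_self] using h3 x y (y.1 + 1, y.2)

lemma abs_slope_sub_sub_mul_le (hκ : 0 < κ) (hMν : 0 ≤ Mν)
    (hν : ∀ x y, |U x y - U x x - ν x * (y.1 - x.1)| ≤ Mν * pdist y x ^ κ)
    (h3 : ∀ x y z : ℝ × ℝ, |U x z - U x y - U y z + U y y - γ x y * (z.1 - y.1)| ≤
      Mbb * ∑ β ∈ A, pdist y x ^ β * pdist z y ^ (κ - β))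
    (x y : ℝ × ℝ) :
    |ν x - ν y - γ x y| * pdist y x ≤
      ((2 ^ κ + 2) * Mν + A.card * Mbb) * pdist y x ^ κ := by
  set s := pdist y x
  have hs : 0 ≤ s := pdist_nonneg y x
  set z : ℝ × ℝ := (y.1 + s, y.2)
  have hzy : pdist z y = s := by rw [pdist_add_fst_self, abs_of_nonneg hs]
  have hzx : pdist z x ^ κ ≤ 2 ^ κ * s ^ κ := by
    rw [← Real.mul_rpow zero_le_two hs]
    refine Real.rpow_le_rpow (pdist_nonneg z x) ?_ hκ.le
    linarith [pdist_add_fst_le x y s, abs_of_nonneg hs]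
  have hsum : ∑ β ∈ A, s ^ β * s ^ (κ - β) = A.card * s ^ κ := by
    rw [Finset.sum_congr rfl fun β _ => (Real.rpow_add' hs (by linarith : β + (κ - β) ≠ 0)).symm]
    simp
  have e1 := (hν x z).trans (mul_le_mul_of_nonneg_left hzx hMν)
  have e2 := hν x y
  have e3 := hν y z
  have e4 := h3 x y z
  rw [hzy] at e3 e4
  rw [hsum] at e4
  rw [← abs_of_nonneg hs, ← abs_mul, abs_of_nonneg hs]
  refine abs_le.mpr ⟨?_, ?_⟩ <;>
    linarith [abs_le.mp e1, abs_le.mp e2, abs_le.mp e3, abs_le.mp e4]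

lemma abs_slope_sub_le (hκ : 1 < κ) (hMν : 0 ≤ Mν) (hMbb : 0 ≤ Mbb)
    (hU : ∀ x, PeriodicFn (U x))
    (hν : ∀ x y, |U x y - U x x - ν x * (y.1 - x.1)| ≤ Mν * pdist y x ^ κ)
    (h3 : ∀ x y z : ℝ × ℝ, |U x z - U x y - U y z + U y y - γ x y * (z.1 - y.1)| ≤
      Mbb * ∑ β ∈ A, pdist y x ^ β * pdist z y ^ (κ - β))
    (x y : ℝ × ℝ) :
    |ν y - ν x| ≤ ((2 ^ κ + 2) * Mν + A.card * Mbb) * pdist y x ^ (κ - 1) +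
      Mbb * ∑ β ∈ A, pdist y x ^ β := by
  rcases eq_or_ne y x with rfl | hyx
  · rw [sub_self, abs_zero]
    have hK : 0 ≤ (2 ^ κ + 2) * Mν + A.card * Mbb := by positivity
    exact add_nonneg (mul_nonneg hK (Real.rpow_nonneg (pdist_nonneg y y) _))
      (mul_nonneg hMbb (Finset.sum_nonneg fun β _ => Real.rpow_nonneg (pdist_nonneg y y) _))
  have hs := pdist_pos hyx
  have hslope : |ν x - ν y - γ x y| ≤ ((2 ^ κ + 2) * Mν + A.card * Mbb) * pdist y x ^ (κ - 1) := by
    have h := abs_slope_sub_sub_mul_le (by linarith) hMν hν h3 x y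
    have hκ1 : pdist y x ^ κ = pdist y x ^ (κ - 1) * pdist y x := by
      rw [← Real.rpow_add_one hs.ne', sub_add_cancel]
    rw [hκ1, ← mul_assoc] at h
    exact le_of_mul_le_mul_right h hs
  have hγ := abs_le_of_periodic_of_three_point hU h3 x y
  refine abs_le.mpr ⟨?_, ?_⟩ <;> linarith [abs_le.mp hslope, abs_le.mp hγ]

end Slope

theorem slope_function_properties_general (lam : ℝ) (κ : ℝ) (hκ1 : 1 < κ) (A : Finset ℝ) :
    ∃ C : ℝ, 0 < C ∧
      ∀ U : ℝ × ℝ → ℝ × ℝ → ℝ,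
        (∃ B : ℝ, ∀ x y, |U x y| ≤ B) →
        (∀ x, PeriodicFn (U x)) →
        (∀ x, Continuous (U x)) →
      ∀ a : ℝ × ℝ → ℝ, (∀ x, a x ∈ Set.Icc lam lam⁻¹) →
      ∀ Mb : ℝ, 0 ≤ Mb →
        (∀ (x : ℝ × ℝ) (L T : ℝ), 0 < L → L ≤ 1 → 0 < T → T ^ (4⁻¹ : ℝ) ≤ 1 →
          ∃ c : ℝ, ∀ y : ℝ × ℝ, pdist x y ≤ L →
            (T ^ (4⁻¹ : ℝ)) ^ (2 : ℝ) *
                |pd2 (mollS T (U x)) y - a x * pd1 (pd1 (mollS T (U x))) y - c| ≤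
              Mb * ∑ β ∈ A, (T ^ (4⁻¹ : ℝ)) ^ β * L ^ (κ - β)) →
      ∀ γfn : ℝ × ℝ → ℝ × ℝ → ℝ,
        Continuous (fun p : (ℝ × ℝ) × (ℝ × ℝ) => γfn p.1 p.2) →
      ∀ Mbb : ℝ, 0 ≤ Mbb →
        (∀ x y z : ℝ × ℝ,
          |U x z - U x y - U y z + U y y - γfn x y * (z.1 - y.1)| ≤
            Mbb * ∑ β ∈ A, pdist y x ^ β * pdist z y ^ (κ - β)) →
      -- (i) uniqueness of ν
      (∀ ν ν' : ℝ × ℝ → ℝ,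
        (∃ M : ℝ, ∀ x y : ℝ × ℝ,
          |U x y - U x x - ν x * (y.1 - x.1)| ≤ M * pdist y x ^ κ) →
        (∃ M : ℝ, ∀ x y : ℝ × ℝ,
          |U x y - U x x - ν' x * (y.1 - x.1)| ≤ M * pdist y x ^ κ) →
        ν = ν') ∧
      -- (ii) periodicity of ν
      (∀ ν : ℝ × ℝ → ℝ,
        (∃ M : ℝ, ∀ x y : ℝ × ℝ,
          |U x y - U x x - ν x * (y.1 - x.1)| ≤ M * pdist y x ^ κ) →
        (∀ (x y : ℝ × ℝ) (k : ℤ × ℤ), U (x.1 + k.1, x.2 + k.2) y = U x y) →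
        PeriodicFn ν) ∧
      -- (iii) Hölder continuity of ν when 0 ∉ A
      ((0 : ℝ) ∉ A →
        ∀ (ν : ℝ × ℝ → ℝ) (Mν : ℝ), 0 ≤ Mν →
        (∀ x y : ℝ × ℝ,
          |U x y - U x x - ν x * (y.1 - x.1)| ≤ Mν * pdist y x ^ κ) →
        ∀ x y : ℝ × ℝ,
          |ν y - ν x| ≤ C * (Mν + Mb + Mbb) *
            (pdist y x ^ (κ - 1) + ∑ β ∈ A, pdist y x ^ β)) := by
  refine ⟨2 ^ κ + 2 + A.card, by positivity, ?_⟩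
  intro U _ hUper _ a _ Mb hMb _ γ _ Mbb hMbb h3
  refine ⟨?_, ?_, ?_⟩
  · rintro ν ν' ⟨M, hM⟩ ⟨M', hM'⟩
    exact funext fun x => slope_unique hκ1 (hM x) (hM' x)
  · rintro ν ⟨M, hM⟩ hUfst x k
    refine slope_unique hκ1 (slope_add_int hM (fun x y k => ?_) x k) (hM x)
    rw [hUfst, hUper]
  · intro _ ν Mν hMν hν x y
    set P := pdist y x ^ (κ - 1)
    set Q := ∑ β ∈ A, pdist y x ^ β
    have hP : 0 ≤ P := Real.rpow_nonneg (pdist_nonneg y x) _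
    have hQ : 0 ≤ Q := Finset.sum_nonneg fun β _ => Real.rpow_nonneg (pdist_nonneg y x) _
    have h2κ : (0 : ℝ) ≤ 2 ^ κ + 2 := by positivity
    have hK : (2 ^ κ + 2) * Mν + A.card * Mbb ≤ (2 ^ κ + 2 + A.card) * (Mν + Mb + Mbb) := by
      nlinarith [mul_nonneg h2κ (add_nonneg hMb hMbb),
        mul_nonneg (Nat.cast_nonneg A.card) (add_nonneg hMν hMb)]
    have hMbb' : Mbb ≤ (2 ^ κ + 2 + A.card) * (Mν + Mb + Mbb) := by
      have hC : 0 ≤ 2 ^ κ + 1 + (A.card : ℝ) := by positivity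
      nlinarith [mul_nonneg hC (add_nonneg hMν (add_nonneg hMb hMbb))]
    calc |ν y - ν x| ≤ ((2 ^ κ + 2) * Mν + A.card * Mbb) * P + Mbb * Q :=
          abs_slope_sub_le hκ1 hMν hMbb hUper hν h3 x y
      _ ≤ (2 ^ κ + 2 + A.card) * (Mν + Mb + Mbb) * (P + Q) := by
          linarith [mul_le_mul_of_nonneg_right hK hP, mul_le_mul_of_nonneg_right hMbb' hQ]

/-- **Properties of the slope function ν.** -/
theorem slope_function_properties (lam : ℝ) (hlam0 : 0 < lam) (hlam1 : lam < 1)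
    (κ : ℝ) (hκ1 : 1 < κ) (hκ2 : κ < 2)
    (A : Finset ℝ) (hA : ∀ β ∈ A, 0 ≤ β ∧ β < κ) :
    ∃ C : ℝ, 0 < C ∧
      ∀ U : ℝ × ℝ → ℝ × ℝ → ℝ,
        (∃ B : ℝ, ∀ x y, |U x y| ≤ B) →
        (∀ x, PeriodicFn (U x)) →
        (∀ x, Continuous (U x)) →
      ∀ a : ℝ × ℝ → ℝ, (∀ x, a x ∈ Set.Icc lam lam⁻¹) →
      ∀ Mb : ℝ, 0 ≤ Mb →
        (∀ (x : ℝ × ℝ) (L T : ℝ), 0 < L → L ≤ 1 → 0 < T → T ^ (4⁻¹ : ℝ) ≤ 1 →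
          ∃ c : ℝ, ∀ y : ℝ × ℝ, pdist x y ≤ L →
            (T ^ (4⁻¹ : ℝ)) ^ (2 : ℝ) *
                |pd2 (mollS T (U x)) y - a x * pd1 (pd1 (mollS T (U x))) y - c| ≤
              Mb * ∑ β ∈ A, (T ^ (4⁻¹ : ℝ)) ^ β * L ^ (κ - β)) →
      ∀ γfn : ℝ × ℝ → ℝ × ℝ → ℝ,
        Continuous (fun p : (ℝ × ℝ) × (ℝ × ℝ) => γfn p.1 p.2) →
      ∀ Mbb : ℝ, 0 ≤ Mbb →
        (∀ x y z : ℝ × ℝ,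
          |U x z - U x y - U y z + U y y - γfn x y * (z.1 - y.1)| ≤
            Mbb * ∑ β ∈ A, pdist y x ^ β * pdist z y ^ (κ - β)) →
      -- (i) uniqueness of ν
      (∀ ν ν' : ℝ × ℝ → ℝ,
        (∃ M : ℝ, ∀ x y : ℝ × ℝ,
          |U x y - U x x - ν x * (y.1 - x.1)| ≤ M * pdist y x ^ κ) →
        (∃ M : ℝ, ∀ x y : ℝ × ℝ,
          |U x y - U x x - ν' x * (y.1 - x.1)| ≤ M * pdist y x ^ κ) →
        ν = ν') ∧
      -- (ii) periodicity of ν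
      (∀ ν : ℝ × ℝ → ℝ,
        (∃ M : ℝ, ∀ x y : ℝ × ℝ,
          |U x y - U x x - ν x * (y.1 - x.1)| ≤ M * pdist y x ^ κ) →
        (∀ (x y : ℝ × ℝ) (k : ℤ × ℤ), U (x.1 + k.1, x.2 + k.2) y = U x y) →
        PeriodicFn ν) ∧
      -- (iii) Hölder continuity of ν when 0 ∉ A
      ((0 : ℝ) ∉ A →
        ∀ (ν : ℝ × ℝ → ℝ) (Mν : ℝ), 0 ≤ Mν →
        (∀ x y : ℝ × ℝ,
          |U x y - U x x - ν x * (y.1 - x.1)| ≤ Mν * pdist y x ^ κ) →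
        ∀ x y : ℝ × ℝ,
          |ν y - ν x| ≤ C * (Mν + Mb + Mbb) *
            (pdist y x ^ (κ - 1) + ∑ β ∈ A, pdist y x ^ β)) :=
  slope_function_properties_general lam κ hκ1 A
end
end
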